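/- Let C_{n,r} be the lollipop graph with girth r ≡ 0 (mod 6). Then 1 is a Laplacian eigenvalue of C_{n,r}, and its multiplicity is 2 if n ≡ 0 (mod 3) and 1 if n ≢ 0 (mod 3). -/

import Mathlib

open SimpleGraph Matrix Polynomial

/-- The Laplacian matrix of a simple graph over `ℝ`. -/
noncomputable def lapR {V : Type} [Fintype V] [DecidableEq V] (G : SimpleGraph V) :
    Matrix V V ℝ :=
  letI := Classical.decRel G.Adj
  G.lapMatrix ℝ

/-- The multiset of Laplacian eigenvalues of a graph, counted with multiplicity,
given as the roots of the characteristic polynomial of the Laplacian matrix. -/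
noncomputable def lapEigs {V : Type} [Fintype V] [DecidableEq V] (G : SimpleGraph V) :
    Multiset ℝ :=
  (lapR G).charpoly.roots

/-- `m_G[0,1)`: the number of Laplacian eigenvalues of `G` in `[0,1)`, with multiplicity. -/
noncomputable def mIco01 {V : Type} [Fintype V] [DecidableEq V] (G : SimpleGraph V) : ℕ :=
  letI : DecidablePred (fun x : ℝ => 0 ≤ x ∧ x < 1) := Classical.decPred _
  Multiset.card ((lapEigs G).filter (fun x => 0 ≤ x ∧ x < 1))

/-- `m_G(μ)`: the multiplicity of `μ` as a Laplacian eigenvalue of `G`. -/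
noncomputable def mEig {V : Type} [Fintype V] [DecidableEq V] (G : SimpleGraph V) (μ : ℝ) : ℕ :=
  Multiset.count μ (lapEigs G)

/-- The lollipop graph `C_{n,r}` on vertices `0, …, n-1`: the path `0-1-⋯-(n-1)` together
with the extra edge joining `0` and `r-1`, so that `0, 1, …, r-1` form a cycle of length `r`
with a pendant path on `n - r` vertices attached at the cycle vertex `r-1`. -/
def lollipop (n r : ℕ) : SimpleGraph (Fin n) :=
  SimpleGraph.fromRel (fun i j => (i : ℕ) + 1 = (j : ℕ) ∨ ((i : ℕ) = 0 ∧ (j : ℕ) = r - 1))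

/-!
At a vertex of degree 2 the eigen-equation `L x = x` reads `x (k + 1) = x k - x (k - 1)`, whose
solutions have period 6, so an eigenvector is determined by `x 0` and `x 1`. Because `6 ∣ r`,
every pair is realised by a combination of two explicit vectors that satisfy the equation away
from the pendant end: the mode `1, 1, 0, -1, -1, 0, …` on the cycle, which vanishes at the
junction `r - 1` and is extended by `0` along the path, and the period-6 mode
`1, 0, -1, -1, 0, 1, …` on all vertices. The first is an eigenvector; the equation at the pendant
end `n - 1` says `x (n - 2) = 0`, which the second satisfies iff `3 ∣ n`. Finally, a real
symmetric matrix is semisimple, so the multiplicity of a root of its characteristic polynomial is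
the dimension of the eigenspace.
-/

open Finset Module

theorem Matrix.IsHermitian.count_roots_charpoly_eq_finrank_eigenspace {𝕜 m : Type*} [RCLike 𝕜]
    [Fintype m] [DecidableEq m] {A : Matrix m m 𝕜} (hA : A.IsHermitian) (μ : 𝕜) :
    A.charpoly.roots.count μ = finrank 𝕜 (End.eigenspace (toLin' A) μ) := by
  have hsymm : End.IsSemisimple (toEuclideanLin A) :=
    End.isFinitelySemisimple_iff_isSemisimple.mp
      (isSymmetric_toEuclideanLin_iff.mpr hA).isFinitelySemisimple
  have hss : End.IsSemisimple (toLin' A) :=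
    ((WithLp.linearEquiv 2 𝕜 (m → 𝕜)).isSemisimple_iff (toEuclideanLin A) (toLin' A) rfl).mp hsymm
  rw [count_roots, ← charpoly_toLin', ← LinearMap.finrank_maxGenEigenspace_eq,
    hss.isFinitelySemisimple.maxGenEigenspace_eq_eigenspace]

theorem Matrix.mem_eigenspace_one_toLin'_iff {R m : Type*} [CommRing R] [Fintype m]
    [DecidableEq m] {A : Matrix m m R} {x : m → R} : x ∈ End.eigenspace (toLin' A) 1 ↔ A *ᵥ x = x := by
  simp

theorem lapR_eq_lapMatrix {V : Type} [Fintype V] [DecidableEq V] (G : SimpleGraph V)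
    [DecidableRel G.Adj] : lapR G = G.lapMatrix ℝ := by
  unfold lapR
  convert rfl

theorem SimpleGraph.lapMatrix_mulVec_apply_eq_sum {R V : Type*} [NonAssocRing R] [Fintype V]
    [DecidableEq V] (G : SimpleGraph V) [DecidableRel G.Adj] (x : V → R) (i : V) :
    (G.lapMatrix R *ᵥ x) i = ∑ j ∈ G.neighborFinset i, (x i - x j) := by
  rw [lapMatrix_mulVec_apply, sum_sub_distrib, sum_const, card_neighborFinset_eq_degree,
    nsmul_eq_mul]

/-- `sixSeq k = sin (k π / 3) / sin (π / 3)`, running `0, 1, 1, 0, -1, -1, …`. -/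
def sixSeq : ℕ → ℝ
  | 0 => 0
  | 1 => 1
  | k + 2 => sixSeq (k + 1) - sixSeq k

namespace sixSeq

theorem add_two (k : ℕ) : sixSeq (k + 2) = sixSeq (k + 1) - sixSeq k := rfl

theorem add_three (k : ℕ) : sixSeq (k + 3) = -sixSeq k := by
  rw [add_two, add_two]
  ring

theorem mod_six (k : ℕ) : sixSeq (k % 6) = sixSeq k := by
  induction k using Nat.strong_induction_on with
  | _ k ih =>
    rcases lt_or_ge k 6 with hk | hk
    · rw [Nat.mod_eq_of_lt hk]
    · obtain ⟨j, rfl⟩ := Nat.exists_eq_add_of_le hk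
      rw [show 6 + j = j + 3 + 3 by ring, add_three, add_three, neg_neg, ← ih j (by omega)]
      congr 1
      omega

theorem congr_mod {k l : ℕ} (h : k % 6 = l % 6) : sixSeq k = sixSeq l := by
  rw [← mod_six k, h, mod_six]

theorem eq_zero_iff (k : ℕ) : sixSeq k = 0 ↔ 3 ∣ k := by
  rw [← mod_six]
  have : k % 6 < 6 := Nat.mod_lt _ (by norm_num)
  interval_cases h : k % 6 <;> norm_num [sixSeq] <;> omega

theorem add_of_six_dvd {r : ℕ} (h6 : 6 ∣ r) (k : ℕ) : sixSeq (r + k) = sixSeq k :=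
  congr_mod (by omega)

theorem sub_one_of_six_dvd {r : ℕ} (h6 : 6 ∣ r) (hr : r ≠ 0) : sixSeq (r - 1) = -1 :=
  (congr_mod (l := 5) (by omega)).trans (by norm_num [sixSeq])

end sixSeq

section Lollipop

variable {n r : ℕ}

theorem lollipop_adj_iff (hr : r ≠ 1) {i j : Fin n} :
    (lollipop n r).Adj i j ↔ (i : ℕ) + 1 = j ∨ (j : ℕ) + 1 = i ∨
      ((i : ℕ) = 0 ∧ (j : ℕ) + 1 = r) ∨ ((j : ℕ) = 0 ∧ (i : ℕ) + 1 = r) := by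
  simp only [lollipop, fromRel_adj, ne_eq, Fin.ext_iff]
  omega

def lollipopCycleVec (n r : ℕ) : Fin n → ℝ := fun i => if (i : ℕ) < r then sixSeq (i + 1) else 0

def lollipopPeriodicVec (n : ℕ) : Fin n → ℝ := fun i => sixSeq (i + 2)

theorem lollipopCycleVec_apply_of_le (h3r : 3 ∣ r) {j : Fin n} (hj : r ≤ (j : ℕ) + 1) :
    lollipopCycleVec n r j = 0 := by
  by_cases hjr : (j : ℕ) < r
  · simp [lollipopCycleVec, hjr, show (j : ℕ) + 1 = r by omega, (sixSeq.eq_zero_iff r).2 h3r]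
  · simp [lollipopCycleVec, hjr]

theorem linearIndependent_lollipopPeriodicVec_lollipopCycleVec (h3 : 3 ≤ r) (hrn : r ≤ n) :
    LinearIndependent ℝ ![lollipopPeriodicVec n, lollipopCycleVec n r] := by
  refine LinearIndependent.pair_iff.2 fun s t hst => ?_
  have h0 := congrFun hst ⟨0, by omega⟩
  have h1 := congrFun hst ⟨1, by omega⟩
  norm_num [lollipopPeriodicVec, lollipopCycleVec, sixSeq, show 0 < r by omega,
    show 1 < r by omega] at h0 h1
  constructor <;> linarith

theorem lollipopCycleVec_ne_zero (h3 : 3 ≤ r) (hrn : r ≤ n) : lollipopCycleVec n r ≠ 0 := by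
  intro h
  have h0 := congrFun h ⟨0, by omega⟩
  norm_num [lollipopCycleVec, sixSeq, show 0 < r by omega] at h0

variable [DecidableRel (lollipop n r).Adj]

section

variable {R : Type*} [NonAssocRing R] {x : Fin n → R}

theorem lapMatrix_lollipop_mulVec_path (hr : r ≠ 1) {i j k : Fin n} (hij : (i : ℕ) + 1 = j)
    (hjk : (j : ℕ) + 1 = k) (hjr : (j : ℕ) + 1 ≠ r) :
    ((lollipop n r).lapMatrix R *ᵥ x) j = (x j - x i) + (x j - x k) := by
  have hN : (lollipop n r).neighborFinset j = {i, k} := by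
    ext
    simp only [mem_neighborFinset, lollipop_adj_iff hr, mem_insert, mem_singleton, Fin.ext_iff]
    omega
  rw [lapMatrix_mulVec_apply_eq_sum, hN, sum_pair (by simp [Fin.ext_iff]; omega)]

theorem lapMatrix_lollipop_mulVec_zero (h3 : 3 ≤ r) {z i k : Fin n} (hz : (z : ℕ) = 0)
    (hi : (i : ℕ) = 1) (hk : (k : ℕ) + 1 = r) :
    ((lollipop n r).lapMatrix R *ᵥ x) z = (x z - x i) + (x z - x k) := by
  have hN : (lollipop n r).neighborFinset z = {i, k} := by
    ext
    simp only [mem_neighborFinset, lollipop_adj_iff (show r ≠ 1 by omega), mem_insert,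
      mem_singleton, Fin.ext_iff]
    omega
  rw [lapMatrix_mulVec_apply_eq_sum, hN, sum_pair (by simp [Fin.ext_iff]; omega)]

theorem lapMatrix_lollipop_mulVec_junction (h3 : 3 ≤ r) {z i j k : Fin n} (hz : (z : ℕ) = 0)
    (hij : (i : ℕ) + 1 = j) (hjk : (j : ℕ) + 1 = k) (hjr : (j : ℕ) + 1 = r) :
    ((lollipop n r).lapMatrix R *ᵥ x) j = (x j - x i) + ((x j - x z) + (x j - x k)) := by
  have hN : (lollipop n r).neighborFinset j = {i, z, k} := by
    ext
    simp only [mem_neighborFinset, lollipop_adj_iff (show r ≠ 1 by omega), mem_insert,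
      mem_singleton, Fin.ext_iff]
    omega
  rw [lapMatrix_mulVec_apply_eq_sum, hN, sum_insert (by simp [Fin.ext_iff]; omega),
    sum_pair (by simp [Fin.ext_iff]; omega)]

theorem lapMatrix_lollipop_mulVec_junction_of_eq (h3 : 3 ≤ r) {z i j : Fin n}
    (hz : (z : ℕ) = 0) (hij : (i : ℕ) + 1 = j) (hjr : (j : ℕ) + 1 = r) (hrn : r = n) :
    ((lollipop n r).lapMatrix R *ᵥ x) j = (x j - x i) + (x j - x z) := by
  have hN : (lollipop n r).neighborFinset j = {i, z} := by
    ext l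
    have := l.isLt
    simp only [mem_neighborFinset, lollipop_adj_iff (show r ≠ 1 by omega), mem_insert,
      mem_singleton, Fin.ext_iff]
    omega
  rw [lapMatrix_mulVec_apply_eq_sum, hN, sum_pair (by simp [Fin.ext_iff]; omega)]

theorem lapMatrix_lollipop_mulVec_last (hr : r ≠ 1) {i j : Fin n} (hij : (i : ℕ) + 1 = j)
    (hj : (j : ℕ) + 1 = n) (hrn : r < n) :
    ((lollipop n r).lapMatrix R *ᵥ x) j = x j - x i := by
  have hN : (lollipop n r).neighborFinset j = {i} := by
    ext l
    have := l.isLt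
    simp only [mem_neighborFinset, lollipop_adj_iff hr, mem_singleton, Fin.ext_iff]
    omega
  rw [lapMatrix_mulVec_apply_eq_sum, hN, sum_singleton]

end

theorem lapMatrix_mulVec_lollipopCycleVec (h3 : 3 ≤ r) (hrn : r ≤ n) (h6 : 6 ∣ r) :
    (lollipop n r).lapMatrix ℝ *ᵥ lollipopCycleVec n r = lollipopCycleVec n r := by
  have hvanish : ∀ k (hk : k < n), r ≤ k + 1 → lollipopCycleVec n r ⟨k, hk⟩ = 0 :=
    fun k hk hkr => lollipopCycleVec_apply_of_le (by omega) hkr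
  funext j
  rcases j with ⟨_ | j, hj⟩
  · rw [lapMatrix_lollipop_mulVec_zero h3 (i := ⟨1, by omega⟩) (k := ⟨r - 1, by omega⟩) rfl rfl
      (by simp; omega), hvanish (r - 1) _ (by omega)]
    simp [lollipopCycleVec, show 0 < r by omega, show 1 < r by omega]
    norm_num [sixSeq]
  rcases (show (j + 2 < n ∧ j + 2 ≠ r) ∨ (j + 2 = r ∧ r < n) ∨ (j + 2 = r ∧ r = n) ∨
      (j + 2 = n ∧ r < n) by omega) with ⟨hjn, hjr⟩ | ⟨hjr, hrn'⟩ | ⟨hjr, hrn'⟩ | ⟨hjn, hrn'⟩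
  · rw [lapMatrix_lollipop_mulVec_path (by omega) (i := ⟨j, by omega⟩) (k := ⟨j + 2, hjn⟩)
      rfl rfl (by simpa using hjr)]
    rcases lt_or_ge (j + 2) r with hjr' | hjr'
    · simp [lollipopCycleVec, show j < r by omega, show j + 1 < r by omega, hjr',
        sixSeq.add_two (j + 1)]
    · rw [hvanish j _ (by omega), hvanish (j + 1) _ (by omega), hvanish (j + 2) _ (by omega)]
      ring
  · obtain rfl : j = r - 2 := by omega
    rw [lapMatrix_lollipop_mulVec_junction h3 (z := ⟨0, by omega⟩) (i := ⟨r - 2, by omega⟩)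
      (k := ⟨r, hrn'⟩) rfl rfl (by simp; omega) (by simp; omega),
      hvanish (r - 2 + 1) _ (by omega), hvanish r _ (by omega)]
    simp [lollipopCycleVec, show r - 2 < r by omega, show 0 < r by omega,
      show r - 2 + 1 = r - 1 by omega, sixSeq.sub_one_of_six_dvd h6 (by omega)]
    norm_num [sixSeq]
  · obtain rfl : j = r - 2 := by omega
    rw [lapMatrix_lollipop_mulVec_junction_of_eq h3 (z := ⟨0, by omega⟩)
      (i := ⟨r - 2, by omega⟩) rfl rfl (by simp; omega) hrn', hvanish (r - 2 + 1) _ (by omega)]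
    simp [lollipopCycleVec, show r - 2 < r by omega, show 0 < r by omega,
      show r - 2 + 1 = r - 1 by omega, sixSeq.sub_one_of_six_dvd h6 (by omega)]
    norm_num [sixSeq]
  · rw [lapMatrix_lollipop_mulVec_last (by omega) (i := ⟨j, by omega⟩) rfl hjn hrn',
      hvanish j _ (by omega), hvanish (j + 1) _ (by omega)]
    ring

theorem lapMatrix_mulVec_lollipopPeriodicVec_apply (h3 : 3 ≤ r) (hrn : r ≤ n) (h6 : 6 ∣ r)
    {j : Fin n} (hj : (j : ℕ) + 1 < n) :
    ((lollipop n r).lapMatrix ℝ *ᵥ lollipopPeriodicVec n) j = lollipopPeriodicVec n j := by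
  rcases j with ⟨_ | j, hj'⟩
  · rw [lapMatrix_lollipop_mulVec_zero h3 (i := ⟨1, by omega⟩) (k := ⟨r - 1, by omega⟩) rfl rfl
      (by simp; omega)]
    simp only [lollipopPeriodicVec, show r - 1 + 2 = r + 1 by omega, sixSeq.add_of_six_dvd h6]
    norm_num [sixSeq]
  by_cases hjr : j + 2 = r
  · obtain rfl : j = r - 2 := by omega
    rw [lapMatrix_lollipop_mulVec_junction h3 (z := ⟨0, by omega⟩) (i := ⟨r - 2, by omega⟩)
      (k := ⟨r, by simp at hj; omega⟩) rfl rfl (by simp; omega) (by simp; omega)]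
    simp only [lollipopPeriodicVec, show r - 2 + 1 + 2 = r + 1 by omega,
      show r - 2 + 2 = r by omega, sixSeq.add_of_six_dvd h6, (sixSeq.eq_zero_iff r).2 (by omega)]
    norm_num [sixSeq]
  · rw [lapMatrix_lollipop_mulVec_path (by omega) (i := ⟨j, by omega⟩)
      (k := ⟨j + 2, by simp at hj; omega⟩) rfl rfl (by simpa using hjr)]
    have hrec := sixSeq.add_two (j + 2)
    simp only [lollipopPeriodicVec]
    ring_nf at hrec ⊢
    linarith

theorem lapMatrix_mulVec_lollipopPeriodicVec (h3 : 3 ≤ r) (hrn : r ≤ n) (h6 : 6 ∣ r)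
    (hn : 3 ∣ n) :
    (lollipop n r).lapMatrix ℝ *ᵥ lollipopPeriodicVec n = lollipopPeriodicVec n := by
  funext j
  by_cases hj : (j : ℕ) + 1 < n
  · exact lapMatrix_mulVec_lollipopPeriodicVec_apply h3 hrn h6 hj
  rcases j with ⟨j, hj'⟩
  obtain rfl : j = n - 1 := by simp at hj; omega
  rcases hrn.lt_or_eq with hrn' | rfl
  · rw [lapMatrix_lollipop_mulVec_last (by omega) (i := ⟨n - 2, by omega⟩) (by simp; omega)
      (by simp; omega) hrn']
    simp only [lollipopPeriodicVec, show n - 2 + 2 = n by omega, (sixSeq.eq_zero_iff n).2 hn]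
    ring
  · rw [lapMatrix_lollipop_mulVec_junction_of_eq h3 (z := ⟨0, by omega⟩)
      (i := ⟨r - 2, by omega⟩) rfl (by simp; omega) (by simp; omega) rfl]
    simp only [lollipopPeriodicVec, show r - 1 + 2 = r + 1 by omega,
      show r - 2 + 2 = r by omega, sixSeq.add_of_six_dvd h6, (sixSeq.eq_zero_iff r).2 (by omega)]
    norm_num [sixSeq]

variable {x : Fin n → ℝ}

theorem eq_zero_of_lapMatrix_lollipop_mulVec_apply_eq (h3 : 3 ≤ r)
    (hx : ∀ j : Fin n, (j : ℕ) + 1 < n → ((lollipop n r).lapMatrix ℝ *ᵥ x) j = x j)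
    (h01 : ∀ j : Fin n, (j : ℕ) ≤ 1 → x j = 0) : x = 0 := by
  suffices h : ∀ k (hk : k < n), x ⟨k, hk⟩ = 0 from funext fun j => h j j.isLt
  intro k
  induction k using Nat.strong_induction_on with
  | _ k ih =>
    intro hk
    rcases k with _ | _ | j
    · exact h01 _ (by simp)
    · exact h01 _ (by simp)
    have h0 := ih j (by omega) (by omega)
    have h1 := ih (j + 1) (by omega) (by omega)
    -- the equation at vertex `j + 1` is linear in `x (j + 2)` with coefficient `-1`
    have heq := hx ⟨j + 1, by omega⟩ (by simp; omega)
    by_cases hjr : j + 2 = r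
    · rw [lapMatrix_lollipop_mulVec_junction h3 (z := ⟨0, by omega⟩) (i := ⟨j, by omega⟩)
        (k := ⟨j + 2, hk⟩) rfl rfl rfl hjr, h0, h1, ih 0 (by omega) (by omega)] at heq
      linarith
    · rw [lapMatrix_lollipop_mulVec_path (by omega) (i := ⟨j, by omega⟩) (k := ⟨j + 2, hk⟩)
        rfl rfl (by simpa using hjr), h0, h1] at heq
      linarith

theorem mem_span_of_lapMatrix_lollipop_mulVec_eq (h3 : 3 ≤ r) (hrn : r ≤ n) (h6 : 6 ∣ r)
    (hx : (lollipop n r).lapMatrix ℝ *ᵥ x = x) :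
    x ∈ Submodule.span ℝ {lollipopPeriodicVec n, lollipopCycleVec n r} := by
  -- the two vectors start with `1, 0` and `1, 1` respectively
  set a := x ⟨0, by omega⟩ - x ⟨1, by omega⟩
  set b := x ⟨1, by omega⟩
  refine Submodule.mem_span_pair.2 ⟨a, b, ?_⟩
  rw [eq_comm, ← sub_eq_zero]
  apply eq_zero_of_lapMatrix_lollipop_mulVec_apply_eq h3
  · intro j hj
    simp only [mulVec_sub, mulVec_add, mulVec_smul, Pi.sub_apply, Pi.add_apply, Pi.smul_apply,
      congrFun hx j, lapMatrix_mulVec_lollipopPeriodicVec_apply h3 hrn h6 hj,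
      congrFun (lapMatrix_mulVec_lollipopCycleVec h3 hrn h6) j]
  · intro j hj
    rcases j with ⟨_ | _ | j, hj'⟩
    · simp [lollipopPeriodicVec, lollipopCycleVec, show 0 < r by omega, a, b]
      norm_num [sixSeq]
    · simp [lollipopPeriodicVec, lollipopCycleVec, show 1 < r by omega, a, b]
      norm_num [sixSeq]
    · simp at hj

theorem eigenspace_one_lapMatrix_lollipop_eq_span_pair (h3 : 3 ≤ r) (hrn : r ≤ n) (h6 : 6 ∣ r)
    (hn : 3 ∣ n) :
    End.eigenspace (toLin' ((lollipop n r).lapMatrix ℝ)) 1 =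
      Submodule.span ℝ {lollipopPeriodicVec n, lollipopCycleVec n r} := by
  refine le_antisymm (fun x hx => mem_span_of_lapMatrix_lollipop_mulVec_eq h3 hrn h6
    (mem_eigenspace_one_toLin'_iff.1 hx)) ?_
  rw [Submodule.span_le, Set.insert_subset_iff, Set.singleton_subset_iff]
  exact ⟨mem_eigenspace_one_toLin'_iff.2 (lapMatrix_mulVec_lollipopPeriodicVec h3 hrn h6 hn),
    mem_eigenspace_one_toLin'_iff.2 (lapMatrix_mulVec_lollipopCycleVec h3 hrn h6)⟩

theorem eigenspace_one_lapMatrix_lollipop_eq_span_singleton (h3 : 3 ≤ r) (hrn : r ≤ n)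
    (h6 : 6 ∣ r) (hn : ¬3 ∣ n) :
    End.eigenspace (toLin' ((lollipop n r).lapMatrix ℝ)) 1 = ℝ ∙ lollipopCycleVec n r := by
  refine le_antisymm (fun x hx => ?_) (Submodule.span_le.2 (Set.singleton_subset_iff.2
    (mem_eigenspace_one_toLin'_iff.2 (lapMatrix_mulVec_lollipopCycleVec h3 hrn h6))))
  have hx := mem_eigenspace_one_toLin'_iff.1 hx
  obtain ⟨a, b, rfl⟩ :=
    Submodule.mem_span_pair.1 (mem_span_of_lapMatrix_lollipop_mulVec_eq h3 hrn h6 hx)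
  have hrn' : r < n := hrn.lt_of_ne (by rintro rfl; omega)
  have hlast := congrFun hx ⟨n - 1, by omega⟩
  rw [lapMatrix_lollipop_mulVec_last (by omega) (i := ⟨n - 2, by omega⟩) (by simp; omega)
    (by simp; omega) hrn'] at hlast
  have hV : lollipopCycleVec n r ⟨n - 2, by omega⟩ = 0 :=
    lollipopCycleVec_apply_of_le (by omega) (by simp; omega)
  have hU : lollipopPeriodicVec n ⟨n - 2, by omega⟩ ≠ 0 := by
    simpa [lollipopPeriodicVec, show n - 2 + 2 = n by omega, sixSeq.eq_zero_iff] using hn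
  simp only [Pi.add_apply, Pi.smul_apply, smul_eq_mul, hV, mul_zero, add_zero] at hlast
  obtain rfl : a = 0 := by simpa [hU] using hlast
  simpa using Submodule.smul_mem _ b (Submodule.mem_span_singleton_self _)

theorem finrank_eigenspace_one_lapMatrix_lollipop (h3 : 3 ≤ r) (hrn : r ≤ n) (h6 : 6 ∣ r) :
    finrank ℝ (End.eigenspace (toLin' ((lollipop n r).lapMatrix ℝ)) 1) =
      if 3 ∣ n then 2 else 1 := by
  split_ifs with hn
  · rw [eigenspace_one_lapMatrix_lollipop_eq_span_pair h3 hrn h6 hn,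
      ← Matrix.range_cons_cons_empty _ _ ![],
      finrank_span_eq_card (linearIndependent_lollipopPeriodicVec_lollipopCycleVec h3 hrn),
      Fintype.card_fin]
  · rw [eigenspace_one_lapMatrix_lollipop_eq_span_singleton h3 hrn h6 hn,
      finrank_span_singleton (lollipopCycleVec_ne_zero h3 hrn)]

end Lollipop

/-- If `r ≡ 0 (mod 6)`, then `1` is a Laplacian eigenvalue of the lollipop graph `C_{n,r}`,
with multiplicity `2` if `n ≡ 0 (mod 3)` and multiplicity `1` otherwise. -/
theorem lollipop_eigenvalue_one_r_zero_mod_six (n r : ℕ) (h3 : 3 ≤ r) (hrn : r ≤ n)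
    (h6 : 6 ∣ r) :
    (1 : ℝ) ∈ lapEigs (lollipop n r) ∧
      mEig (lollipop n r) 1 = (if 3 ∣ n then 2 else 1) := by
  classical
  have hcount : mEig (lollipop n r) 1 = if 3 ∣ n then 2 else 1 := by
    rw [mEig, lapEigs, lapR_eq_lapMatrix,
      (isHermitian_lapMatrix ℝ _).count_roots_charpoly_eq_finrank_eigenspace,
      finrank_eigenspace_one_lapMatrix_lollipop h3 hrn h6]
  refine ⟨Multiset.count_pos.1 ?_, hcount⟩
  rw [← mEig, hcount]
  split_ifs <;> norm_num
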